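/- arXiv:1705.09912 — 2 statements merged into one kernel-verified Lean document; each statement's English description precedes it below -/
import Mathlib

section
/- The nuclear norm proximal operator (uniform weight case): for Y ∈ ℝ^{m×n} with SVD Y = UΣVᵀ and uniform weight w ≥ 0, the matrix X̂ = U S_{w/2}(Σ) Vᵀ, where S_{w/2}(Σ)_{ii} = max(Σ_{ii} − w/2, 0), minimizes ‖Y − X‖_F² + w‖X‖_* over all X ∈ ℝ^{m×n}, where ‖X‖_* is the nuclear norm. -/
/-!
The residual `Y - X̂ = (w / 2) • G`, where `G = U diag(g) Vᵀ` with `g = 1` on the singular values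
above `w / 2` and `g = 2σ / w` on the others, is a subgradient of the nuclear norm at `X̂`:
`‖G v‖ ≤ ‖v‖` for all `v` and `⟨G, X̂⟩ = ‖X̂‖_*`. Evaluating the trace in an eigenbasis of `XᵀX`
and applying Cauchy–Schwarz gives the duality bound `⟨G, X⟩ ≤ ‖X‖_*`, so expanding
`‖Y - X‖² = ‖Y - X̂‖² + 2⟨Y - X̂, X̂ - X⟩ + ‖X̂ - X‖²` shows that `X̂` is optimal.
-/

open Matrix BigOperators

noncomputable def fnorm {m n : ℕ} (A : Matrix (Fin m) (Fin n) ℝ) : ℝ :=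
  Real.sqrt (∑ i, ∑ j, (A i j) ^ 2)

/-- Singular values of a real matrix (square roots of the eigenvalues of `XᵀX`). -/
noncomputable def sv {m n : ℕ} (X : Matrix (Fin m) (Fin n) ℝ) (i : Fin n) : ℝ :=
  Real.sqrt ((show (Xᵀ * X).IsHermitian by
    rw [← Matrix.conjTranspose_eq_transpose_of_trivial]
    exact Matrix.isHermitian_conjTranspose_mul_self X).eigenvalues i)

/-- Nuclear norm: sum of singular values. -/
noncomputable def nuclearNorm {m n : ℕ} (X : Matrix (Fin m) (Fin n) ℝ) : ℝ :=
  ∑ i, sv X i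

section Frobenius

variable {m n : ℕ}

lemma trace_transpose_mul_eq_sum (A B : Matrix (Fin m) (Fin n) ℝ) :
    trace (Aᵀ * B) = ∑ i, ∑ j, A i j * B i j := by
  simp only [trace, diag, mul_apply, transpose_apply]
  exact Finset.sum_comm

lemma fnorm_sq (A : Matrix (Fin m) (Fin n) ℝ) : fnorm A ^ 2 = trace (Aᵀ * A) := by
  rw [trace_transpose_mul_eq_sum, fnorm, Real.sq_sqrt (by positivity)]
  simp only [sq]

lemma fnorm_add_sq (A B : Matrix (Fin m) (Fin n) ℝ) :
    fnorm (A + B) ^ 2 = fnorm A ^ 2 + 2 * trace (Aᵀ * B) + fnorm B ^ 2 := by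
  simp only [fnorm_sq, trace_transpose_mul_eq_sum, Matrix.add_apply, Finset.mul_sum,
    ← Finset.sum_add_distrib]
  exact Finset.sum_congr rfl fun i _ => Finset.sum_congr rfl fun j _ => by ring

end Frobenius

section Orthogonal

lemma dotProduct_mulVec_self_of_transpose_mul_eq_one {k l : ℕ} {U : Matrix (Fin k) (Fin l) ℝ}
    (hU : Uᵀ * U = 1) (v : Fin l → ℝ) : (U *ᵥ v) ⬝ᵥ (U *ᵥ v) = v ⬝ᵥ v := by
  rw [dotProduct_mulVec, ← mulVec_transpose, mulVec_mulVec, hU, one_mulVec]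

lemma orthogonal_conj_transpose_mul {k l m n : ℕ} {U : Matrix (Fin k) (Fin m) ℝ}
    (hU : Uᵀ * U = 1) (V : Matrix (Fin l) (Fin n) ℝ) (A B : Matrix (Fin m) (Fin n) ℝ) :
    (U * A * Vᵀ)ᵀ * (U * B * Vᵀ) = V * (Aᵀ * B) * Vᵀ := by
  simp only [transpose_mul, transpose_transpose, Matrix.mul_assoc]
  rw [← Matrix.mul_assoc Uᵀ, hU, Matrix.one_mul]

lemma trace_orthogonal_conj {l n : ℕ} {V : Matrix (Fin l) (Fin n) ℝ} (hV : Vᵀ * V = 1)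
    (M : Matrix (Fin n) (Fin n) ℝ) : trace (V * M * Vᵀ) = trace M := by
  rw [trace_mul_comm, ← Matrix.mul_assoc, hV, Matrix.one_mul]

lemma charpoly_orthogonal_conj {n : ℕ} {V : Matrix (Fin n) (Fin n) ℝ} (hV : Vᵀ * V = 1)
    (M : Matrix (Fin n) (Fin n) ℝ) : charpoly (V * M * Vᵀ) = charpoly M := by
  rw [charpoly_mul_comm, ← Matrix.mul_assoc, hV, Matrix.one_mul]

variable {m n : ℕ}

lemma isHermitian_transpose_mul_self (X : Matrix (Fin m) (Fin n) ℝ) : (Xᵀ * X).IsHermitian := by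
  rw [← conjTranspose_eq_transpose_of_trivial]
  exact isHermitian_conjTranspose_mul_self X

lemma sv_orthogonal_conj {U : Matrix (Fin m) (Fin m) ℝ} {V : Matrix (Fin n) (Fin n) ℝ}
    (hU : Uᵀ * U = 1) (hV : Vᵀ * V = 1) (A : Matrix (Fin m) (Fin n) ℝ) :
    sv (U * A * Vᵀ) = sv A := by
  have h : ((U * A * Vᵀ)ᵀ * (U * A * Vᵀ)).charpoly = (Aᵀ * A).charpoly := by
    rw [orthogonal_conj_transpose_mul hU, charpoly_orthogonal_conj hV]
  funext i
  unfold sv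
  rw [((isHermitian_transpose_mul_self _).eigenvalues_eq_eigenvalues_iff
    (isHermitian_transpose_mul_self A)).mpr h]

lemma nuclearNorm_orthogonal_conj {U : Matrix (Fin m) (Fin m) ℝ} {V : Matrix (Fin n) (Fin n) ℝ}
    (hU : Uᵀ * U = 1) (hV : Vᵀ * V = 1) (A : Matrix (Fin m) (Fin n) ℝ) :
    nuclearNorm (U * A * Vᵀ) = nuclearNorm A := by
  rw [nuclearNorm, nuclearNorm, sv_orthogonal_conj hU hV]

end Orthogonal

section Duality

lemma dotProduct_le_sqrt_mul_sqrt {ι : Type*} [Fintype ι] (u v : ι → ℝ) :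
    u ⬝ᵥ v ≤ √(u ⬝ᵥ u) * √(v ⬝ᵥ v) := by
  simpa only [dotProduct, sq] using Real.sum_mul_le_sqrt_mul_sqrt Finset.univ u v

lemma trace_eq_sum_dotProduct_mulVec {n : ℕ} {W : Matrix (Fin n) (Fin n) ℝ} (hW : W * Wᵀ = 1)
    (M : Matrix (Fin n) (Fin n) ℝ) : trace M = ∑ j, Wᵀ j ⬝ᵥ (M *ᵥ Wᵀ j) := by
  conv_lhs => rw [← trace_orthogonal_conj (V := Wᵀ) (by rwa [transpose_transpose]) M]
  simp only [trace, diag, mul_apply, transpose_apply, mulVec, dotProduct, Finset.mul_sum,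
    Finset.sum_mul, mul_assoc]
  exact Finset.sum_congr rfl fun _ _ => Finset.sum_comm

lemma trace_transpose_mul_le_nuclearNorm {m n : ℕ} (G X : Matrix (Fin m) (Fin n) ℝ)
    (hG : ∀ v, (G *ᵥ v) ⬝ᵥ (G *ᵥ v) ≤ v ⬝ᵥ v) : trace (Gᵀ * X) ≤ nuclearNorm X := by
  set hH := isHermitian_transpose_mul_self X
  set W : Matrix (Fin n) (Fin n) ℝ := ↑hH.eigenvectorUnitary
  have hWWt : W * Wᵀ = 1 := by
    simpa [W, star_eq_conjTranspose] using mem_unitaryGroup_iff.mp hH.eigenvectorUnitary.2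
  have hWtW : Wᵀ * W = 1 := by
    simpa [W, star_eq_conjTranspose] using mem_unitaryGroup_iff'.mp hH.eigenvectorUnitary.2
  have hunit : ∀ j, Wᵀ j ⬝ᵥ Wᵀ j = 1 := fun j => by
    simpa [mul_apply, dotProduct] using congrFun (congrFun hWtW j) j
  have hXW : ∀ j, (X *ᵥ Wᵀ j) ⬝ᵥ (X *ᵥ Wᵀ j) = hH.eigenvalues j := fun j => by
    have heig : (Xᵀ * X) *ᵥ Wᵀ j = hH.eigenvalues j • Wᵀ j := hH.mulVec_eigenvectorBasis j
    rw [dotProduct_mulVec, ← mulVec_transpose, mulVec_mulVec, dotProduct_comm, heig,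
      dotProduct_smul, hunit, smul_eq_mul, mul_one]
  rw [trace_eq_sum_dotProduct_mulVec hWWt]
  refine Finset.sum_le_sum fun j _ => ?_
  calc Wᵀ j ⬝ᵥ ((Gᵀ * X) *ᵥ Wᵀ j) = (G *ᵥ Wᵀ j) ⬝ᵥ (X *ᵥ Wᵀ j) := by
        rw [← mulVec_mulVec, dotProduct_mulVec, vecMul_transpose]
    _ ≤ √((G *ᵥ Wᵀ j) ⬝ᵥ (G *ᵥ Wᵀ j)) * √((X *ᵥ Wᵀ j) ⬝ᵥ (X *ᵥ Wᵀ j)) :=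
        dotProduct_le_sqrt_mul_sqrt _ _
    _ ≤ 1 * sv X j := by
        gcongr
        · calc _ ≤ √(Wᵀ j ⬝ᵥ Wᵀ j) := Real.sqrt_le_sqrt (hG _)
            _ = 1 := by rw [hunit, Real.sqrt_one]
        · rw [hXW]; rfl
    _ = sv X j := one_mul _

end Duality

lemma fnorm_sq_add_nuclearNorm_le_of_subgradient {m n : ℕ} {Y Xhat G : Matrix (Fin m) (Fin n) ℝ}
    {w : ℝ} (hw : 0 ≤ w) (hG : ∀ v, (G *ᵥ v) ⬝ᵥ (G *ᵥ v) ≤ v ⬝ᵥ v)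
    (hYX : Y - Xhat = (w / 2) • G) (hGX : trace (Gᵀ * Xhat) = nuclearNorm Xhat)
    (X : Matrix (Fin m) (Fin n) ℝ) :
    fnorm (Y - Xhat) ^ 2 + w * nuclearNorm Xhat ≤ fnorm (Y - X) ^ 2 + w * nuclearNorm X := by
  have hdual := trace_transpose_mul_le_nuclearNorm G X hG
  have hcross :
      2 * trace ((Y - Xhat)ᵀ * (Xhat - X)) = w * (nuclearNorm Xhat - trace (Gᵀ * X)) := by
    rw [hYX, transpose_smul, smul_mul, trace_smul, Matrix.mul_sub, trace_sub, hGX, smul_eq_mul]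
    ring
  rw [← sub_add_sub_cancel Y Xhat X, fnorm_add_sq]
  nlinarith [sq_nonneg (fnorm (Xhat - X)), mul_le_mul_of_nonneg_left hdual hw]

lemma Matrix.IsHermitian.sum_comp_eigenvalues_of_eq_diagonal {n : ℕ}
    {A : Matrix (Fin n) (Fin n) ℝ} (hA : A.IsHermitian) {c : Fin n → ℝ} (hAc : A = diagonal c)
    (f : ℝ → ℝ) : ∑ i, f (hA.eigenvalues i) = ∑ i, f (c i) := by
  subst hAc
  have h : Finset.univ.val.map hA.eigenvalues = Finset.univ.val.map c := by
    have := hA.roots_charpoly_eq_eigenvalues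
    rw [charpoly_diagonal, Polynomial.roots_prod _ _ (by simp [Finset.prod_ne_zero_iff,
      Polynomial.X_sub_C_ne_zero])] at this
    simpa using this.symm
  change (Finset.univ.val.map (f ∘ hA.eigenvalues)).sum = (Finset.univ.val.map (f ∘ c)).sum
  rw [← Multiset.map_map, h, Multiset.map_map]

lemma sq_sum_eq_sum_sq_of_mul_eq_zero {ι R : Type*} [Fintype ι] [CommSemiring R] {x : ι → R}
    (hx : ∀ i k, i ≠ k → x i * x k = 0) : (∑ i, x i) ^ 2 = ∑ i, x i ^ 2 := by
  rw [sq, Finset.sum_mul_sum]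
  refine Finset.sum_congr rfl fun i _ => ?_
  rw [Finset.sum_eq_single i (fun k _ hk => hx i k (Ne.symm hk)) (by simp), sq]

lemma sum_sq_le_one_of_mul_eq_zero {ι : Type*} [Fintype ι] {x : ι → ℝ}
    (hx : ∀ i k, i ≠ k → x i * x k = 0) (hx1 : ∀ i, |x i| ≤ 1) : ∑ i, x i ^ 2 ≤ 1 := by
  by_cases h : ∃ i₀, x i₀ ≠ 0
  · obtain ⟨i₀, hi₀⟩ := h
    rw [Finset.sum_eq_single i₀ (fun i _ hi => by simpa [hi₀] using hx i i₀ hi) (by simp)]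
    exact (sq_le_one_iff_abs_le_one _).mpr (hx1 i₀)
  · push Not at h
    simp [h]

def IsRectDiagonal {α : Type*} [Zero α] {m n : ℕ} (D : Matrix (Fin m) (Fin n) α) : Prop :=
  ∀ (i : Fin m) (j : Fin n), (i : ℕ) ≠ j → D i j = 0

namespace IsRectDiagonal

variable {m n : ℕ} {D : Matrix (Fin m) (Fin n) ℝ}

lemma map {α β : Type*} [Zero α] [Zero β] {D : Matrix (Fin m) (Fin n) α} (hD : IsRectDiagonal D)
    {f : α → β} (hf : f 0 = 0) : IsRectDiagonal (D.map f) := fun i j hij => by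
  simp [hD i j hij, hf]

lemma mul_eq_zero_of_ne_left (hD : IsRectDiagonal D) {i i' : Fin m} (hi : i ≠ i') (j : Fin n) :
    D i j * D i' j = 0 := by
  by_cases hij : (i : ℕ) = j
  · rw [hD i' j fun h => hi (Fin.ext (hij.trans h.symm)), mul_zero]
  · rw [hD i j hij, zero_mul]

lemma mul_eq_zero_of_ne_right (hD : IsRectDiagonal D) (i : Fin m) {j j' : Fin n} (hj : j ≠ j') :
    D i j * D i j' = 0 := by
  by_cases hij : (i : ℕ) = j
  · rw [hD i j' fun h => hj (Fin.ext (hij.symm.trans h)), mul_zero]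
  · rw [hD i j hij, zero_mul]

lemma transpose_mul_self (hD : IsRectDiagonal D) :
    Dᵀ * D = diagonal fun j => ∑ i, D i j ^ 2 := by
  ext j k
  rw [mul_apply]
  by_cases hjk : j = k
  · subst hjk
    simp [sq]
  · simp [diagonal_apply_ne _ hjk, hD.mul_eq_zero_of_ne_right _ hjk]

lemma nuclearNorm_eq_sum (hD : IsRectDiagonal D) (hD0 : ∀ i j, 0 ≤ D i j) :
    nuclearNorm D = ∑ i, ∑ j, D i j := by
  refine Eq.trans ?_ Finset.sum_comm
  refine ((isHermitian_transpose_mul_self D).sum_comp_eigenvalues_of_eq_diagonal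
    hD.transpose_mul_self Real.sqrt).trans (Finset.sum_congr rfl fun j _ => ?_)
  rw [← sq_sum_eq_sum_sq_of_mul_eq_zero fun i i' hi => hD.mul_eq_zero_of_ne_left hi j,
    Real.sqrt_sq (Finset.sum_nonneg fun i _ => hD0 i j)]

lemma dotProduct_mulVec_self_le (hD : IsRectDiagonal D) (hD1 : ∀ i j, |D i j| ≤ 1)
    (v : Fin n → ℝ) : (D *ᵥ v) ⬝ᵥ (D *ᵥ v) ≤ v ⬝ᵥ v := by
  rw [dotProduct_mulVec, ← mulVec_transpose, mulVec_mulVec, hD.transpose_mul_self]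
  refine Finset.sum_le_sum fun j _ => ?_
  have hcol : ∑ i, D i j ^ 2 ≤ 1 :=
    sum_sq_le_one_of_mul_eq_zero (fun i i' hi => hD.mul_eq_zero_of_ne_left hi j) (hD1 · j)
  simp only [mulVec_diagonal]
  nlinarith [mul_self_nonneg (v j)]

end IsRectDiagonal

section SoftThreshold

def softThreshold (τ s : ℝ) : ℝ := max (s - τ) 0

noncomputable def softThresholdSubgrad (τ s : ℝ) : ℝ := if τ < s then 1 else s / τ

variable {τ s : ℝ}

lemma softThreshold_zero (hτ : 0 ≤ τ) : softThreshold τ 0 = 0 := by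
  simp [softThreshold, hτ]

lemma softThresholdSubgrad_zero (hτ : 0 ≤ τ) : softThresholdSubgrad τ 0 = 0 := by
  simp [softThresholdSubgrad, hτ.not_gt]

lemma mul_softThresholdSubgrad (hτ : 0 ≤ τ) (hs : 0 ≤ s) :
    τ * softThresholdSubgrad τ s = s - softThreshold τ s := by
  unfold softThresholdSubgrad softThreshold
  split_ifs with h
  · rw [max_eq_left (by linarith)]
    ring
  · rw [max_eq_right (by linarith), sub_zero]
    rcases hτ.eq_or_lt with rfl | hτ
    · linarith
    · field_simp

lemma abs_softThresholdSubgrad_le_one (hτ : 0 ≤ τ) (hs : 0 ≤ s) :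
    |softThresholdSubgrad τ s| ≤ 1 := by
  unfold softThresholdSubgrad
  split_ifs with h
  · simp
  · rw [abs_of_nonneg (div_nonneg hs hτ)]
    exact div_le_one_of_le₀ (not_lt.mp h) hτ

lemma softThresholdSubgrad_mul_softThreshold :
    softThresholdSubgrad τ s * softThreshold τ s = softThreshold τ s := by
  unfold softThresholdSubgrad softThreshold
  split_ifs with h
  · rw [one_mul]
  · rw [max_eq_right (by linarith), mul_zero]

end SoftThreshold

theorem stmt6_general {m n : ℕ} (U : Matrix (Fin m) (Fin m) ℝ) (V : Matrix (Fin n) (Fin n) ℝ)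
    (S : Matrix (Fin m) (Fin n) ℝ) (Y : Matrix (Fin m) (Fin n) ℝ)
    (hU₂ : Uᵀ * U = 1) (hV₁ : V * Vᵀ = 1) (hV₂ : Vᵀ * V = 1)
    (hSdiag : ∀ (i : Fin m) (j : Fin n), (i : ℕ) ≠ (j : ℕ) → S i j = 0)
    (hSnn : ∀ (i : Fin m) (j : Fin n), 0 ≤ S i j)
    (hY : Y = U * S * Vᵀ) (w : ℝ) (hw : 0 ≤ w)
    (Xhat : Matrix (Fin m) (Fin n) ℝ)
    (hXhat : Xhat = U * (Matrix.of fun (i : Fin m) (j : Fin n) =>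
      if (i : ℕ) = (j : ℕ) then max (S i j - w / 2) 0 else 0) * Vᵀ) :
    ∀ X : Matrix (Fin m) (Fin n) ℝ,
      fnorm (Y - Xhat) ^ 2 + w * nuclearNorm Xhat ≤ fnorm (Y - X) ^ 2 + w * nuclearNorm X := by
  have hτ : 0 ≤ w / 2 := by positivity
  have hS : IsRectDiagonal S := hSdiag
  have hT : (Matrix.of fun (i : Fin m) (j : Fin n) =>
      if (i : ℕ) = (j : ℕ) then max (S i j - w / 2) 0 else 0) = S.map (softThreshold (w / 2)) := by
    ext i j
    by_cases hij : (i : ℕ) = j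
    · simp [hij, softThreshold]
    · simp [hij, hS i j hij, softThreshold_zero hτ]
  set G := S.map (softThresholdSubgrad (w / 2))
  have hG : IsRectDiagonal G := hS.map (softThresholdSubgrad_zero hτ)
  refine fnorm_sq_add_nuclearNorm_le_of_subgradient hw (G := U * G * Vᵀ) (fun v => ?_) ?_ ?_
  · rw [← mulVec_mulVec, ← mulVec_mulVec, dotProduct_mulVec_self_of_transpose_mul_eq_one hU₂]
    refine (hG.dotProduct_mulVec_self_le
      (fun i j => abs_softThresholdSubgrad_le_one hτ (hSnn i j)) _).trans_eq ?_
    exact dotProduct_mulVec_self_of_transpose_mul_eq_one (by rwa [transpose_transpose]) v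
  · rw [hY, hXhat, hT, ← Matrix.sub_mul, ← Matrix.mul_sub, ← Matrix.smul_mul, ← Matrix.mul_smul]
    congr 2
    ext i j
    simp [G, mul_softThresholdSubgrad hτ (hSnn i j)]
  · rw [hXhat, hT, orthogonal_conj_transpose_mul hU₂, trace_orthogonal_conj hV₂,
      nuclearNorm_orthogonal_conj hU₂ hV₂, trace_transpose_mul_eq_sum,
      (hS.map (softThreshold_zero hτ)).nuclearNorm_eq_sum fun i j => le_max_right _ _]
    simp [G, softThresholdSubgrad_mul_softThreshold]

/-- Singular value soft-thresholding solves the nuclear norm proximal problem: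
if `Y = UΣVᵀ` with `U`, `V` orthogonal and `Σ` (rectangular) diagonal with nonnegative
entries, then `X̂ = U S_{w/2}(Σ) Vᵀ` minimizes `‖Y − X‖_F² + w‖X‖_*`. -/
theorem stmt6 {m n : ℕ} (U : Matrix (Fin m) (Fin m) ℝ) (V : Matrix (Fin n) (Fin n) ℝ)
    (S : Matrix (Fin m) (Fin n) ℝ) (Y : Matrix (Fin m) (Fin n) ℝ)
    (hU₁ : U * Uᵀ = 1) (hU₂ : Uᵀ * U = 1) (hV₁ : V * Vᵀ = 1) (hV₂ : Vᵀ * V = 1)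
    (hSdiag : ∀ (i : Fin m) (j : Fin n), (i : ℕ) ≠ (j : ℕ) → S i j = 0)
    (hSnn : ∀ (i : Fin m) (j : Fin n), 0 ≤ S i j)
    (hY : Y = U * S * Vᵀ) (w : ℝ) (hw : 0 ≤ w)
    (Xhat : Matrix (Fin m) (Fin n) ℝ)
    (hXhat : Xhat = U * (Matrix.of fun (i : Fin m) (j : Fin n) =>
      if (i : ℕ) = (j : ℕ) then max (S i j - w / 2) 0 else 0) * Vᵀ) :
    ∀ X : Matrix (Fin m) (Fin n) ℝ,
      fnorm (Y - Xhat) ^ 2 + w * nuclearNorm Xhat ≤ fnorm (Y - X) ^ 2 + w * nuclearNorm X :=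
  stmt6_general U V S Y hU₂ hV₁ hV₂ hSdiag hSnn hY w hw Xhat hXhat
end

section
/- Weighted singular value shrinkage in diagonal form: let σ₁ ≥ σ₂ ≥ ... ≥ σ_M ≥ 0 and weights 0 ≤ w₁ ≤ w₂ ≤ ... ≤ w_M (non-descending). Then the constrained problem min Σᵢ (σᵢ − ŝᵢ)² + (2wᵢ/ρ)ŝᵢ subject to ŝ₁ ≥ ŝ₂ ≥ ... ≥ ŝ_M ≥ 0 is solved by ŝᵢ = max(σᵢ − wᵢ/ρ, 0); in particular these values are automatically non-increasing. -/
open BigOperators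

/-- Weighted singular value shrinkage in diagonal form: with `σ₁ ≥ ... ≥ σ_M ≥ 0` and
non-descending nonnegative weights, `ŝᵢ = max(σᵢ − wᵢ/ρ, 0)` is non-increasing,
nonnegative, and minimizes the separable objective over the ordered feasible set. -/
theorem stmt7 (M : ℕ) (ρ : ℝ) (hρ : 0 < ρ) (σ w : Fin M → ℝ)
    (hσnn : ∀ i, 0 ≤ σ i) (hσmono : ∀ i j : Fin M, i ≤ j → σ j ≤ σ i)
    (hwnn : ∀ i, 0 ≤ w i) (hwmono : ∀ i j : Fin M, i ≤ j → w i ≤ w j)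
    (shat : Fin M → ℝ) (hshat : ∀ i, shat i = max (σ i - w i / ρ) 0) :
    ((∀ i, 0 ≤ shat i) ∧ ∀ i j : Fin M, i ≤ j → shat j ≤ shat i) ∧
    ∀ s : Fin M → ℝ, (∀ i, 0 ≤ s i) → (∀ i j : Fin M, i ≤ j → s j ≤ s i) →
      ∑ i, ((σ i - shat i) ^ 2 + (2 * w i / ρ) * shat i)
        ≤ ∑ i, ((σ i - s i) ^ 2 + (2 * w i / ρ) * s i) := by
  constructor
  · constructor
    · intro i; rw [hshat i]; exact le_max_right _ _
    · intro i j hij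
      rw [hshat i, hshat j]
      apply max_le_max _ le_rfl
      have h1 := hσmono i j hij
      have h2 : w i / ρ ≤ w j / ρ := by
        gcongr
        exact hwmono i j hij
      linarith
  · intro s hs hsmono
    apply Finset.sum_le_sum
    intro i _
    have hw : 0 ≤ w i / ρ := div_nonneg (hwnn i) hρ.le
    have hsi := hs i
    rw [hshat i]
    have h2 : 2 * w i / ρ = 2 * (w i / ρ) := by ring
    rw [h2]
    set c := w i / ρ with hc
    rcases le_or_gt 0 (σ i - c) with h | h
    · rw [max_eq_left h]; nlinarith [sq_nonneg (s i - (σ i - c))]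
    · rw [max_eq_right h.le]; nlinarith [sq_nonneg (s i)]
end
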